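/- Let T ∈ ℝ^{n_1×⋯×n_d} have a TR-representation with cores G_1,…,G_d and TR-ranks (r_0, r_1, …, r_d), r_d = r_0. Let A' ∈ ℝ^{(r_0 n_1)×r_1} be the matrix obtained by stacking the matrices G_1(1), G_1(2), …, G_1(n_1) vertically. If rank(A') = s < r_1, so that A' = U·V for some U ∈ ℝ^{(r_0 n_1)×s} and V ∈ ℝ^{s×r_1}, then T admits a TR-representation with TR-ranks (r_0, s, r_2, …, r_{d−1}, r_0): its first cores are obtained by reshaping U into matrices Ĝ_1(i_1) ∈ ℝ^{r_0×s}, its second cores are Ĝ_2(i_2) = V·G_2(i_2), and the remaining cores are G_3,…,G_d unchanged. In particular, if (r_0, r_1, …, r_d) is a minimal TR-rank of T realized by the cores G_k, then the stacked matrix A' has full column rank r_1. -/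

import Mathlib

/-- Cyclic successor on `Fin d`. -/
def finSucc {d : ℕ} (k : Fin d) : Fin d := ⟨(k.val + 1) % d, Nat.mod_lt _ k.pos⟩

/-- Value of the tensor-ring contraction of cores `G` at the multi-index `i`
(the trace of the product of the core matrices, in index form). -/
def trVal {d : ℕ} (n ρ : Fin d → ℕ)
    (G : ∀ k : Fin d, Fin (n k) → Matrix (Fin (ρ k)) (Fin (ρ (finSucc k))) ℝ)
    (i : ∀ k : Fin d, Fin (n k)) : ℝ :=
  ∑ α : ∀ k : Fin d, Fin (ρ k), ∏ k : Fin d, G k (i k) (α k) (α (finSucc k))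

/-- `(ρ 0, …, ρ (d-1), ρ 0)` is a TR-rank of `T`. -/
def IsTRRank {d : ℕ} (n ρ : Fin d → ℕ) (T : (∀ k : Fin d, Fin (n k)) → ℝ) : Prop :=
  ∃ G : ∀ k : Fin d, Fin (n k) → Matrix (Fin (ρ k)) (Fin (ρ (finSucc k))) ℝ,
    ∀ i, T i = trVal n ρ G i

/-- The `k`-th unfolding matrix of a tensor. -/
def unfold {d : ℕ} (n : Fin d → ℕ) (T : (∀ k : Fin d, Fin (n k)) → ℝ) (k : ℕ) :
    Matrix (∀ j : {j : Fin d // j.val < k}, Fin (n j.val))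
      (∀ j : {j : Fin d // ¬ j.val < k}, Fin (n j.val)) ℝ :=
  Matrix.of fun a b => T (fun j => if h : j.val < k then a ⟨j, h⟩ else b ⟨j, h⟩)

lemma finSucc_zero {d : ℕ} (hd : 2 ≤ d) :
    finSucc (⟨0, by omega⟩ : Fin d) = ⟨1, by omega⟩ := by
  ext
  show (0 + 1) % d = 1
  exact Nat.mod_eq_of_lt (by omega)

lemma finSucc_ne_one {d : ℕ} (hd : 2 ≤ d) (k : Fin d) (hk : k ≠ ⟨0, by omega⟩) :
    finSucc k ≠ ⟨1, by omega⟩ := by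
  intro h
  apply hk
  have hv : (k.val + 1) % d = 1 := congrArg Fin.val h
  have hkd := k.isLt
  ext
  show k.val = 0
  rcases Nat.lt_or_ge (k.val + 1) d with h' | h'
  · rw [Nat.mod_eq_of_lt h'] at hv; omega
  · have hkd1 : k.val + 1 = d := by omega
    rw [hkd1, Nat.mod_self] at hv
    omega


/-!
Split the trace formula at the bond between cores `p` and `p + 1` (in the theorem, `p = 0`).
The tensor then depends on these two cores only through the contractions
`∑ₓ G_p(i_p)[a, x] G_{p+1}(i_{p+1})[x, c] = (A' G_{p+1}(i_{p+1}))[(i_p, a), c]`,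
where `A'` stacks the slices of `G_p`. If `A' = U V`, then `A' G_{p+1} = U (V G_{p+1})`,
so the reshaped `U` and the cores `V G_{p+1}` represent the same tensor through a bond of
size `s`. A rank factorization gives `s = rank A'`, and minimality of the TR-rank then
forbids `rank A' < ρ₁`.
-/

lemma finSucc_val {d : ℕ} (k : Fin d) :
    (finSucc k).val = if k.val + 1 = d then 0 else k.val + 1 := by
  have := k.isLt
  split_ifs with h
  · simp [finSucc, h]
  · exact Nat.mod_eq_of_lt (by omega)

lemma finSucc_injective {d : ℕ} : Function.Injective (finSucc : Fin d → Fin d) := by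
  intro a b h
  have hv := congrArg Fin.val h
  rw [finSucc_val, finSucc_val] at hv
  ext
  split_ifs at hv <;> omega

lemma finSucc_ne_self {d : ℕ} (hd : 2 ≤ d) (k : Fin d) : finSucc k ≠ k := by
  intro h
  have hv := congrArg Fin.val h
  rw [finSucc_val] at hv
  split_ifs at hv <;> omega

theorem Matrix.exists_eq_mul_of_rank {K m n : Type*} [Field K] [Fintype n] [DecidableEq n]
    (A : Matrix m n K) :
    ∃ (U : Matrix m (Fin A.rank) K) (V : Matrix (Fin A.rank) n K), A = U * V := by
  let b : Module.Basis (Fin A.rank) K (LinearMap.range A.mulVecLin) :=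
    Module.finBasisOfFinrankEq K _ rfl
  let col (j : n) : LinearMap.range A.mulVecLin :=
    ⟨_, LinearMap.mem_range_self _ (Pi.single j 1)⟩
  refine ⟨Matrix.of fun x t => (b t : m → K) x, Matrix.of fun t j => b.repr (col j) t, ?_⟩
  ext x j
  have hcol :=
    congrArg (fun w : LinearMap.range A.mulVecLin => (w : m → K) x) (b.sum_repr (col j))
  simp only [Submodule.coe_sum, Submodule.coe_smul, Finset.sum_apply, Pi.smul_apply,
    smul_eq_mul] at hcol
  have hAcol : (col j : m → K) x = A x j := by simp [col]
  rw [Matrix.mul_apply, ← hAcol, ← hcol]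
  exact Finset.sum_congr rfl fun t _ => mul_comm _ _

lemma trVal_eq_sum_bond {d : ℕ} (hd : 2 ≤ d) (n τ : Fin d → ℕ)
    (M : ∀ k : Fin d, Fin (n k) → Matrix (Fin (τ k)) (Fin (τ (finSucc k))) ℝ)
    (i : ∀ k : Fin d, Fin (n k)) (p : Fin d) :
    trVal n τ M i = ∑ f : ∀ j : {j : Fin d // j ≠ finSucc p}, Fin (τ j),
      (∑ x : Fin (τ (finSucc p)),
        M p (i p) (f ⟨p, (finSucc_ne_self hd p).symm⟩) x *
          M (finSucc p) (i (finSucc p)) x (f ⟨finSucc (finSucc p), finSucc_ne_self hd _⟩)) *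
      ∏ k : {k : Fin d // k ≠ p ∧ k ≠ finSucc p},
        M k (i k) (f ⟨k, k.2.2⟩) (f ⟨finSucc k, finSucc_injective.ne k.2.1⟩) := by
  classical
  let e := Equiv.piSplitAt (finSucc p) (fun k => Fin (τ k))
  rw [trVal, ← e.symm.sum_comp, Fintype.sum_prod_type, Finset.sum_comm]
  refine Finset.sum_congr rfl fun f _ => ?_
  rw [Finset.sum_mul]
  refine Finset.sum_congr rfl fun x _ => ?_
  have hbond : e.symm (x, f) (finSucc p) = x := congrArg Prod.fst (e.apply_symm_apply (x, f))
  have hoff (j : Fin d) (hj : j ≠ finSucc p) : e.symm (x, f) j = f ⟨j, hj⟩ :=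
    congrFun (congrArg Prod.snd (e.apply_symm_apply (x, f))) ⟨j, hj⟩
  rw [← Finset.mul_prod_erase _ _ (Finset.mem_univ p),
    ← Finset.mul_prod_erase _ _
      (Finset.mem_erase.2 ⟨finSucc_ne_self hd p, Finset.mem_univ _⟩),
    ← mul_assoc, Finset.prod_subtype (p := fun k => k ≠ p ∧ k ≠ finSucc p) _
      (fun k => by simp [and_comm])]
  congr 1
  · rw [hoff p, hbond, hoff _ (finSucc_ne_self hd _)]
  · exact Finset.prod_congr rfl fun k _ => by
      rw [hoff k k.2.2, hoff _ (finSucc_injective.ne k.2.1)]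

section BondFactor

variable {d : ℕ} {n ρ σ : Fin d → ℕ}
  {G : ∀ k : Fin d, Fin (n k) → Matrix (Fin (ρ k)) (Fin (ρ (finSucc k))) ℝ}
  {p j : Fin d} {s : ℕ} {A' : Matrix (Fin (n p) × Fin (ρ p)) (Fin (ρ j)) ℝ}
  {U : Matrix (Fin (n p) × Fin (ρ p)) (Fin s) ℝ} {V : Matrix (Fin s) (Fin (ρ j)) ℝ}

theorem trVal_eq_of_bond_factor (hd : 2 ≤ d)
    {H : ∀ k : Fin d, Fin (n k) → Matrix (Fin (σ k)) (Fin (σ (finSucc k))) ℝ}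
    (hj : finSucc p = j)
    (hA' : ∀ i x y, A' (i, x) y = G p i x (Fin.cast (congrArg ρ hj.symm) y))
    (hUV : A' = U * V) (hσ1 : σ j = s) (hσ : ∀ k, k ≠ j → σ k = ρ k)
    (hH0 : ∀ i x y, H p i x y =
      U (i, Fin.cast (hσ p (hj ▸ (finSucc_ne_self hd p).symm)) x)
        (Fin.cast ((congrArg σ hj).trans hσ1) y))
    (hH1 : ∀ i x y, H j i x y =
      ∑ z, V (Fin.cast hσ1 x) z * G j i z (Fin.cast (hσ _ (finSucc_ne_self hd j)) y))
    (hHr : ∀ k (hk0 : k ≠ p) (hk1 : k ≠ j), ∀ i x y, H k i x y =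
      G k i (Fin.cast (hσ k hk1) x) (Fin.cast (hσ _ (hj ▸ finSucc_injective.ne hk0)) y))
    (i : ∀ k : Fin d, Fin (n k)) :
    trVal n ρ G i = trVal n σ H i := by
  subst hj hσ1
  rw [trVal_eq_sum_bond hd n ρ G i p, trVal_eq_sum_bond hd n σ H i p]
  refine Fintype.sum_equiv
    (Equiv.piCongrRight fun j : {j // j ≠ finSucc p} => finCongr (hσ j.1 j.2).symm) _ _
    fun f => ?_
  congr 1
  · set W := G (finSucc p) (i (finSucc p))
    set a := f ⟨p, (finSucc_ne_self hd p).symm⟩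
    set c := f ⟨finSucc (finSucc p), finSucc_ne_self hd _⟩
    have hassoc : (A' * W) (i p, a) c = (U * (V * W)) (i p, a) c := by
      rw [hUV, Matrix.mul_assoc]
    simp only [Matrix.mul_apply, hA'] at hassoc
    simp only [hH0, hH1]
    exact hassoc
  · exact Finset.prod_congr rfl fun k _ => by rw [hHr k k.2.1 k.2.2]; rfl

theorem isTRRank_of_bond_factor (hd : 2 ≤ d) {T : (∀ k : Fin d, Fin (n k)) → ℝ}
    (hT : ∀ i, T i = trVal n ρ G i) (hj : finSucc p = j)
    (hA' : ∀ i x y, A' (i, x) y = G p i x (Fin.cast (congrArg ρ hj.symm) y))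
    (hUV : A' = U * V) (hσ1 : σ j = s) (hσ : ∀ k, k ≠ j → σ k = ρ k) :
    IsTRRank n σ T := by
  subst hj hσ1
  classical
  let H : ∀ k : Fin d, Fin (n k) → Matrix (Fin (σ k)) (Fin (σ (finSucc k))) ℝ := fun k =>
    if h0 : k = p then fun i x y =>
      U (Fin.cast (congrArg n h0) i,
        Fin.cast ((congrArg σ h0).trans (hσ p (finSucc_ne_self hd p).symm)) x)
        (Fin.cast (congrArg (σ ∘ finSucc) h0) y)
    else if h1 : k = finSucc p then fun i x y =>
      ∑ z, V (Fin.cast (congrArg σ h1) x) z * G (finSucc p) (Fin.cast (congrArg n h1) i) z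
        (Fin.cast ((congrArg (σ ∘ finSucc) h1).trans (hσ _ (finSucc_ne_self hd _))) y)
    else fun i x y =>
      G k i (Fin.cast (hσ k h1) x) (Fin.cast (hσ _ (finSucc_injective.ne h0)) y)
  refine ⟨H, fun i => (hT i).trans (trVal_eq_of_bond_factor hd rfl hA' hUV rfl hσ ?_ ?_ ?_ i)⟩
  · intro i x y
    rw [show H p = _ from dif_pos rfl]
    rfl
  · intro i x y
    rw [show H (finSucc p) = _ from (dif_neg (finSucc_ne_self hd p)).trans (dif_pos rfl)]
    rfl
  · intro k hk0 hk1 i x y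
    rw [show H k = _ from (dif_neg hk0).trans (dif_neg hk1)]

end BondFactor

/-- If the vertical stacking `A'` of the first cores of a TR-representation of `T`
factors as `A' = U * V` through `Fin s`, then `T` admits a TR-representation with
TR-ranks `(ρ 0, s, ρ 2, …, ρ (d-1), ρ 0)`, whose first cores are obtained by reshaping
`U`, whose second cores are `V * G₂(i₂)`, and whose remaining cores are unchanged.
In particular, if the TR-rank `ρ` is minimal, then `A'` has full column rank `ρ 1`. -/
theorem tr_first_core_factorization {d : ℕ} (hd : 2 ≤ d) (n ρ : Fin d → ℕ)
    (G : ∀ k : Fin d, Fin (n k) → Matrix (Fin (ρ k)) (Fin (ρ (finSucc k))) ℝ)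
    (T : (∀ k : Fin d, Fin (n k)) → ℝ)
    (hT : ∀ i, T i = trVal n ρ G i)
    (A' : Matrix (Fin (n ⟨0, by omega⟩) × Fin (ρ ⟨0, by omega⟩)) (Fin (ρ ⟨1, by omega⟩)) ℝ)
    (hA' : ∀ i x y, A' (i, x) y =
      G ⟨0, by omega⟩ i x (Fin.cast (congrArg ρ (finSucc_zero hd).symm) y)) :
    (∀ (s : ℕ), A'.rank = s → s < ρ ⟨1, by omega⟩ →
      ∀ (U : Matrix (Fin (n ⟨0, by omega⟩) × Fin (ρ ⟨0, by omega⟩)) (Fin s) ℝ)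
        (V : Matrix (Fin s) (Fin (ρ ⟨1, by omega⟩)) ℝ),
        A' = U * V →
        ∀ (σ : Fin d → ℕ) (hσ1 : σ ⟨1, by omega⟩ = s)
          (hσ : ∀ k : Fin d, k ≠ ⟨1, by omega⟩ → σ k = ρ k)
          (H : ∀ k : Fin d, Fin (n k) → Matrix (Fin (σ k)) (Fin (σ (finSucc k))) ℝ),
          -- the first cores are obtained by reshaping `U`:
          (∀ i x y, H ⟨0, Nat.lt_of_lt_of_le Nat.zero_lt_two hd⟩ i x y =
            U (i, Fin.cast (hσ ⟨0, Nat.lt_of_lt_of_le Nat.zero_lt_two hd⟩ (by simp [Fin.ext_iff])) x)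
              (Fin.cast (by rw [finSucc_zero hd]; exact hσ1) y)) →
          -- the second cores are `V * G₂(i₂)`:
          (∀ i x y, H ⟨1, hd⟩ i x y =
            ∑ z : Fin (ρ ⟨1, hd⟩),
              V (Fin.cast hσ1 x) z *
                G ⟨1, hd⟩ i z
                  (Fin.cast (hσ (finSucc ⟨1, hd⟩) (finSucc_ne_one hd _ (by simp [Fin.ext_iff]))) y)) →
          -- the remaining cores are unchanged:
          (∀ (k : Fin d) (hk0 : k ≠ ⟨0, by omega⟩) (hk1 : k ≠ ⟨1, by omega⟩),
            ∀ i x y, H k i x y =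
              G k i (Fin.cast (hσ k hk1) x)
                (Fin.cast (hσ (finSucc k) (finSucc_ne_one hd k hk0)) y)) →
          ∀ i, T i = trVal n σ H i) ∧
    ((∀ ρ' : Fin d → ℕ, IsTRRank n ρ' T → (∀ k, ρ' k ≤ ρ k) → ρ' = ρ) →
      A'.rank = ρ ⟨1, by omega⟩) := by
  refine ⟨fun s _ _ U V hUV σ hσ1 hσ H hH0 hH1 hHr i =>
    (hT i).trans (trVal_eq_of_bond_factor hd (finSucc_zero hd) hA' hUV hσ1 hσ hH0 hH1 hHr i),
    fun hmin => ?_⟩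
  obtain ⟨U, V, hUV⟩ := A'.exists_eq_mul_of_rank
  have hrank : IsTRRank n (Function.update ρ ⟨1, by omega⟩ A'.rank) T :=
    isTRRank_of_bond_factor hd hT (finSucc_zero hd) hA' hUV (Function.update_self _ _ _)
      fun _ hk => Function.update_of_ne hk _ _
  by_contra hne
  have hlt : A'.rank < ρ ⟨1, by omega⟩ :=
    lt_of_le_of_ne (by simpa using A'.rank_le_card_width) hne
  have hmin₁ := congrFun (hmin _ hrank (update_le_self_iff.2 hlt.le)) ⟨1, by omega⟩
  exact hne (by simpa using hmin₁)
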